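/- Let f and g be norms on ℝ^p with dual norms f* and g*, let (a, b) be a linear classifier with a ≠ 0, let ρ > 0, let x_F ∈ ℝ^p satisfy ⟪a, x_F⟫ < b, and let x_RCF be an optimal robust counterfactual of x_F under f with robustness norm g and radius ρ, with x_RCF ≠ x_F. Assume there is a constant C such that g*(w) ≤ C · f*(w) for all w ∈ ℝ^p. Set v := (1 / f(x_RCF − x_F)) • (x_RCF − x_F). Then for every d ∈ ℝ with d ≥ ρ · C, the point x̄ := x_RCF − d • v satisfies ⟪a, x̄⟫ ≤ b, i.e., x̄ has the same classification as x_F. -/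

import Mathlib

open Finset

noncomputable section

/-- The standard inner product on `Fin p → ℝ`. -/
def dot {p : ℕ} (a x : Fin p → ℝ) : ℝ := ∑ k, a k * x k

/-- `f` is a norm on `ℝ^p`. -/
def IsNorm {p : ℕ} (f : (Fin p → ℝ) → ℝ) : Prop :=
  (∀ x, f x = 0 ↔ x = 0) ∧ (∀ (c : ℝ) (x : Fin p → ℝ), f (c • x) = |c| * f x) ∧
    (∀ x y, f (x + y) ≤ f x + f y)

/-- The dual norm `f*(w) = sup { ⟪w, v⟫ : f v ≤ 1 }`. -/
def dualNorm {p : ℕ} (f : (Fin p → ℝ) → ℝ) (w : Fin p → ℝ) : ℝ :=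
  sSup {t : ℝ | ∃ v : Fin p → ℝ, f v ≤ 1 ∧ t = dot w v}

/-- `xCF` is an optimal counterfactual of the factual `xF` (classified 'No') under norm `f`. -/
def IsOptCF {p : ℕ} (a : Fin p → ℝ) (b : ℝ) (f : (Fin p → ℝ) → ℝ)
    (xF xCF : Fin p → ℝ) : Prop :=
  b ≤ dot a xCF ∧ ∀ z : Fin p → ℝ, b ≤ dot a z → f (xCF - xF) ≤ f (z - xF)

/-- `xRCF` is an optimal robust counterfactual of the factual `xF` (classified 'No')
under norm `f`, with robustness norm `g` and radius `ρ`. -/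
def IsOptRCF {p : ℕ} (a : Fin p → ℝ) (b : ℝ) (f g : (Fin p → ℝ) → ℝ) (ρ : ℝ)
    (xF xRCF : Fin p → ℝ) : Prop :=
  (∀ s : Fin p → ℝ, g s ≤ ρ → b ≤ dot a (xRCF + s)) ∧
    ∀ z : Fin p → ℝ, (∀ s : Fin p → ℝ, g s ≤ ρ → b ≤ dot a (z + s)) →
      f (xRCF - xF) ≤ f (z - xF)

/-- `w` is a subgradient of `f` at `x₀`. -/
def IsSubgradient {p : ℕ} (f : (Fin p → ℝ) → ℝ) (x₀ w : Fin p → ℝ) : Prop :=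
  ∀ y : Fin p → ℝ, f x₀ + dot w (y - x₀) ≤ f y

/-!
Since the dual norm is attained, the robustness constraint `b ≤ ⟪a, x + s⟫` for all `g s ≤ ρ`
is the half-space `b + ρ g*(a) ≤ ⟪a, x⟫`, so an optimal robust counterfactual is an optimal
plain counterfactual for the threshold `b' = b + ρ g*(a)`. For a half-space, the maximiser of
`f*(a)` gives a competitor at distance `(b' - ⟪a, x_F⟫) / f*(a)`; together with
`⟪a, x - x_F⟫ ≤ f*(a) f(x - x_F)` this forces `⟪a, x_RCF⟫ = b'` and
`⟪a, x_RCF - x_F⟫ = f*(a) f(x_RCF - x_F)`. Hence `⟪a, x̄⟫ = b + ρ g*(a) - d f*(a)`, which is at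
most `b + (ρ C - d) f*(a) ≤ b`.
-/

lemma dot_add_right {p : ℕ} (a x y : Fin p → ℝ) : dot a (x + y) = dot a x + dot a y :=
  dotProduct_add a x y

lemma dot_sub_right {p : ℕ} (a x y : Fin p → ℝ) : dot a (x - y) = dot a x - dot a y :=
  dotProduct_sub a x y

lemma dot_neg_right {p : ℕ} (a x : Fin p → ℝ) : dot a (-x) = -dot a x :=
  dotProduct_neg a x

lemma dot_smul_right {p : ℕ} (a : Fin p → ℝ) (c : ℝ) (x : Fin p → ℝ) :
    dot a (c • x) = c * dot a x :=
  dotProduct_smul c a x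

lemma continuous_dot {p : ℕ} (a : Fin p → ℝ) : Continuous (dot a) :=
  continuous_const.dotProduct continuous_id

namespace IsNorm

variable {p : ℕ} {f : (Fin p → ℝ) → ℝ}

lemma map_zero (hf : IsNorm f) : f 0 = 0 :=
  (hf.1 0).2 rfl

lemma map_neg (hf : IsNorm f) (x : Fin p → ℝ) : f (-x) = f x := by
  simpa using hf.2.1 (-1) x

lemma map_smul_of_nonneg (hf : IsNorm f) {c : ℝ} (hc : 0 ≤ c) (x : Fin p → ℝ) :
    f (c • x) = c * f x := by
  rw [hf.2.1, abs_of_nonneg hc]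

lemma nonneg (hf : IsNorm f) (x : Fin p → ℝ) : 0 ≤ f x := by
  have h := hf.2.2 x (-x)
  rw [add_neg_cancel, hf.map_zero, hf.map_neg] at h
  linarith

lemma pos (hf : IsNorm f) {x : Fin p → ℝ} (hx : x ≠ 0) : 0 < f x :=
  (hf.nonneg x).lt_of_ne fun h => hx ((hf.1 x).1 h.symm)

lemma le_mul_norm (hf : IsNorm f) : ∃ K, ∀ x, f x ≤ K * ‖x‖ := by
  classical
  refine ⟨∑ i, f (Pi.single i 1), fun x => ?_⟩
  calc f x = f (∑ i, x i • Pi.single i (1 : ℝ)) := by rw [← pi_eq_sum_univ' x]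
    _ ≤ ∑ i, f (x i • Pi.single i (1 : ℝ)) :=
        Finset.le_sum_of_subadditive f hf.map_zero.le hf.2.2 _ _
    _ ≤ ∑ i, ‖x‖ * f (Pi.single i 1) := by
        gcongr with i
        rw [hf.2.1]
        exact mul_le_mul_of_nonneg_right (norm_le_pi_norm x i) (hf.nonneg _)
    _ = (∑ i, f (Pi.single i 1)) * ‖x‖ := by rw [← Finset.mul_sum, mul_comm]

lemma continuous (hf : IsNorm f) : Continuous f := by
  obtain ⟨K, hK⟩ := hf.le_mul_norm
  refine (LipschitzWith.of_le_add_mul' K fun x y => ?_).continuous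
  calc f x = f (y + (x - y)) := by rw [add_sub_cancel]
    _ ≤ f y + K * dist x y := by
        rw [dist_eq_norm]
        linarith [hf.2.2 y (x - y), hK (x - y)]

lemma exists_pos_mul_norm_le (hf : IsNorm f) : ∃ m > 0, ∀ x, m * ‖x‖ ≤ f x := by
  rcases isEmpty_or_nonempty (Fin p) with hp | hp
  · exact ⟨1, one_pos, fun x => by simp [Subsingleton.elim x 0, hf.map_zero]⟩
  obtain ⟨x₀, hx₀, hmin⟩ := (isCompact_sphere (0 : Fin p → ℝ) 1).exists_isMinOn
    (NormedSpace.sphere_nonempty.2 zero_le_one) hf.continuous.continuousOn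
  refine ⟨f x₀, hf.pos (ne_zero_of_mem_unit_sphere ⟨x₀, hx₀⟩), fun x => ?_⟩
  rcases eq_or_ne x 0 with rfl | hx
  · simp [hf.map_zero]
  have hnx : 0 < ‖x‖ := norm_pos_iff.2 hx
  have hsph : ‖x‖⁻¹ • x ∈ Metric.sphere (0 : Fin p → ℝ) 1 := by
    simp [norm_smul, hnx.ne']
  calc f x₀ * ‖x‖ ≤ f (‖x‖⁻¹ • x) * ‖x‖ := by gcongr; exact hmin hsph
    _ = f x := by rw [hf.map_smul_of_nonneg (inv_nonneg.2 hnx.le)]; field_simp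

lemma isCompact_unitBall (hf : IsNorm f) : IsCompact {x | f x ≤ 1} := by
  obtain ⟨m, hm, hlb⟩ := hf.exists_pos_mul_norm_le
  refine Metric.isCompact_of_isClosed_isBounded (isClosed_le hf.continuous continuous_const) ?_
  refine (Metric.isBounded_closedBall (x := 0) (r := 1 / m)).subset fun x hx => ?_
  rw [mem_closedBall_zero_iff, le_div_iff₀' hm]
  exact (hlb x).trans hx

lemma exists_isGreatest_dualSet (hf : IsNorm f) (w : Fin p → ℝ) :
    ∃ v, f v ≤ 1 ∧ IsGreatest {t | ∃ v, f v ≤ 1 ∧ t = dot w v} (dot w v) := by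
  obtain ⟨v, hv, hmax⟩ := hf.isCompact_unitBall.exists_isMaxOn
    ⟨0, show f 0 ≤ 1 by rw [hf.map_zero]; exact zero_le_one⟩ (continuous_dot w).continuousOn
  exact ⟨v, hv, ⟨v, hv, rfl⟩, by rintro _ ⟨u, hu, rfl⟩; exact hmax hu⟩

lemma exists_dot_eq_dualNorm (hf : IsNorm f) (w : Fin p → ℝ) :
    ∃ v, f v ≤ 1 ∧ dot w v = dualNorm f w := by
  obtain ⟨v, hv, hgr⟩ := hf.exists_isGreatest_dualSet w
  exact ⟨v, hv, hgr.csSup_eq.symm⟩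

lemma dot_le_dualNorm (hf : IsNorm f) (w : Fin p → ℝ) {v : Fin p → ℝ} (hv : f v ≤ 1) :
    dot w v ≤ dualNorm f w := by
  obtain ⟨_, _, hgr⟩ := hf.exists_isGreatest_dualSet w
  exact (hgr.2 ⟨v, hv, rfl⟩).trans_eq hgr.csSup_eq.symm

lemma dualNorm_nonneg (hf : IsNorm f) (w : Fin p → ℝ) : 0 ≤ dualNorm f w := by
  simpa [dot] using hf.dot_le_dualNorm w (v := 0) (by rw [hf.map_zero]; exact zero_le_one)

lemma dot_le_dualNorm_mul (hf : IsNorm f) (w v : Fin p → ℝ) :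
    dot w v ≤ dualNorm f w * f v := by
  rcases eq_or_ne v 0 with rfl | hv
  · simp [dot, hf.map_zero]
  have hfv : 0 < f v := hf.pos hv
  have hunit : f ((f v)⁻¹ • v) ≤ 1 := by
    rw [hf.map_smul_of_nonneg (inv_nonneg.2 hfv.le), inv_mul_cancel₀ hfv.ne']
  have := hf.dot_le_dualNorm w hunit
  rw [dot_smul_right, inv_mul_le_iff₀ hfv] at this
  linarith

end IsNorm

section Counterfactual

variable {p : ℕ} {a : Fin p → ℝ} {b ρ : ℝ} {f g : (Fin p → ℝ) → ℝ} {xF x : Fin p → ℝ}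

lemma forall_le_dot_add_iff (hg : IsNorm g) (hρ : 0 ≤ ρ) (z : Fin p → ℝ) :
    (∀ s, g s ≤ ρ → b ≤ dot a (z + s)) ↔ b + ρ * dualNorm g a ≤ dot a z := by
  constructor
  · intro h
    obtain ⟨v, hv, hva⟩ := hg.exists_dot_eq_dualNorm a
    have hs : g (-(ρ • v)) ≤ ρ := by
      rw [hg.map_neg, hg.map_smul_of_nonneg hρ]
      exact mul_le_of_le_one_right hρ hv
    have := h _ hs
    rw [dot_add_right, dot_neg_right, dot_smul_right, hva] at this
    linarith
  · intro h s hs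
    have hdual := hg.dot_le_dualNorm_mul a (-s)
    rw [dot_neg_right, hg.map_neg] at hdual
    have := mul_le_mul_of_nonneg_left hs (hg.dualNorm_nonneg a)
    rw [dot_add_right]
    linarith

lemma IsOptRCF.isOptCF (hg : IsNorm g) (hρ : 0 ≤ ρ) (h : IsOptRCF a b f g ρ xF x) :
    IsOptCF a (b + ρ * dualNorm g a) f xF x :=
  ⟨(forall_le_dot_add_iff hg hρ x).1 h.1,
    fun z hz => h.2 z ((forall_le_dot_add_iff hg hρ z).2 hz)⟩

lemma IsOptCF.dualNorm_mul_le (hf : IsNorm f) (hxF : dot a xF ≤ b) (h : IsOptCF a b f xF x) :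
    dualNorm f a * f (x - xF) ≤ b - dot a xF := by
  rcases (hf.dualNorm_nonneg a).eq_or_lt with hzero | hpos
  · rw [← hzero, zero_mul]
    linarith
  obtain ⟨w, hw, hwa⟩ := hf.exists_dot_eq_dualNorm a
  set c := (b - dot a xF) / dualNorm f a
  have hc : 0 ≤ c := div_nonneg (by linarith) hpos.le
  have hz : b ≤ dot a (xF + c • w) := by
    rw [dot_add_right, dot_smul_right, hwa, div_mul_cancel₀ _ hpos.ne']
    linarith
  have hdist : f (x - xF) ≤ c := calc
    f (x - xF) ≤ f (xF + c • w - xF) := h.2 _ hz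
    _ = c * f w := by rw [add_sub_cancel_left, hf.map_smul_of_nonneg hc]
    _ ≤ c := mul_le_of_le_one_right hc hw
  calc dualNorm f a * f (x - xF) ≤ dualNorm f a * c := by gcongr
    _ = b - dot a xF := mul_div_cancel₀ _ hpos.ne'

lemma IsOptCF.dot_eq_and_dot_sub_eq (hf : IsNorm f) (hxF : dot a xF ≤ b)
    (h : IsOptCF a b f xF x) :
    dot a x = b ∧ dot a (x - xF) = dualNorm f a * f (x - xF) := by
  have hle := hf.dot_le_dualNorm_mul a (x - xF)
  have hge := h.dualNorm_mul_le hf hxF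
  rw [dot_sub_right] at hle ⊢
  have := h.1
  constructor <;> linarith

end Counterfactual

theorem rcf_backtrack_same_classification {p : ℕ}
    (f g : (Fin p → ℝ) → ℝ) (hf : IsNorm f) (hg : IsNorm g)
    (a : Fin p → ℝ) (b : ℝ) (ρ : ℝ) (hρ : 0 < ρ)
    (xF xRCF : Fin p → ℝ) (hxF : dot a xF < b)
    (hopt : IsOptRCF a b f g ρ xF xRCF) (hne : xRCF ≠ xF)
    (C : ℝ) (hC : ∀ w : Fin p → ℝ, dualNorm g w ≤ C * dualNorm f w) :
    ∀ d : ℝ, ρ * C ≤ d →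
      dot a (xRCF - d • ((1 / f (xRCF - xF)) • (xRCF - xF))) ≤ b := by
  intro d hd
  have hδ : 0 < f (xRCF - xF) := hf.pos (sub_ne_zero.2 hne)
  have hxF' : dot a xF ≤ b + ρ * dualNorm g a := by
    linarith [mul_nonneg hρ.le (hg.dualNorm_nonneg a)]
  obtain ⟨hx, hu⟩ := (hopt.isOptCF hg hρ.le).dot_eq_and_dot_sub_eq hf hxF'
  rw [dot_sub_right a xRCF, dot_smul_right, dot_smul_right, hx, hu, one_div,
    mul_comm (dualNorm f a), inv_mul_cancel_left₀ hδ.ne']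
  have hslack : ρ * dualNorm g a ≤ d * dualNorm f a := calc
    ρ * dualNorm g a ≤ ρ * (C * dualNorm f a) := mul_le_mul_of_nonneg_left (hC a) hρ.le
    _ = ρ * C * dualNorm f a := (mul_assoc _ _ _).symm
    _ ≤ d * dualNorm f a := mul_le_mul_of_nonneg_right hd (hf.dualNorm_nonneg a)
  linarith
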